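/- Let n ≥ 1 with n ∉ N_B and n+1 ∉ N_B, and let ε_1,…,ε_n with ε_i ∈ {0,1,…,d_i−1} and ε_n ≠ 0. Then the quasi-nega-D values of the following two D-digit sequences are equal: the sequence with digits ε_1,…,ε_{n−1}, ε_n at position n, 0 at position n+1, and β_k at every position k ≥ n+2; and the sequence with digits ε_1,…,ε_{n−1}, ε_n−1 at position n, d_{n+1}−1 at position n+1, and γ_k at every position k ≥ n+2. -/

import Mathlib

open scoped Classical BigOperators

/-- Sign of the `n`-th term: `-1` if `n ∈ N_B`, `+1` otherwise. -/
noncomputable def sigma (B : Set ℕ+) (n : ℕ+) : ℝ := if n ∈ B then -1 else 1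

/-- The partial product `d_1 d_2 ⋯ d_n`. -/
noncomputable def dprod (d : ℕ+ → ℕ) (n : ℕ+) : ℝ := ∏ i ∈ Finset.Icc 1 n, (d i : ℝ)

/-- The quasi-nega-D value of a D-digit sequence `ε`:
`T(ε) = Σ_{n≥1} σ_n ε_n / (d_1 d_2 ⋯ d_n)`. -/
noncomputable def qndVal (d : ℕ+ → ℕ) (B : Set ℕ+) (ε : ℕ+ → ℕ) : ℝ :=
  ∑' n : ℕ+, sigma B n * (ε n : ℝ) / dprod d n

/-!
Place by place, `σ_k ε_k` of the first expansion minus that of the second is `1` at `k = n` and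
`-(d_k - 1)` at every `k > n`: at `n` and `n + 1` because `σ = 1` there, beyond because
`σ_k (β_k - γ_k) = -(d_k - 1)` whether or not `k ∈ N_B`. Since
`(d_k - 1) / (d_1 ⋯ d_k) = 1 / (d_1 ⋯ d_{k-1}) - 1 / (d_1 ⋯ d_k)`, the tail telescopes to
`1 / (d_1 ⋯ d_n)` and cancels the difference at `n`.
-/

open Filter Topology

lemma hasSum_sub_succ_of_antitone {f : ℕ → ℝ} (hf : Antitone f) (hlim : Tendsto f atTop (𝓝 0)) :
    HasSum (fun j => f j - f (j + 1)) (f 0) := by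
  rw [hasSum_iff_tendsto_nat_of_nonneg (fun j => sub_nonneg.2 (hf j.le_succ))]
  simp_rw [Finset.sum_range_sub']
  simpa using tendsto_const_nhds.sub hlim

lemma map_succPNat_range (k : ℕ+) :
    (Finset.range k).map ⟨Nat.succPNat, Nat.succPNat_injective⟩ = Finset.Icc 1 k := by
  ext j
  simp only [Finset.mem_Icc, Finset.mem_map, Finset.mem_range, Function.Embedding.coeFn_mk,
    ← PNat.coe_le_coe]
  refine ⟨?_, fun h => ⟨j.natPred, ?_, j.succPNat_natPred⟩⟩
  · rintro ⟨i, hi, rfl⟩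
    simpa using hi
  · have := j.pos
    rw [PNat.natPred]
    omega

namespace QuasiNegaD

variable {d : ℕ+ → ℕ}

/-- `dprod` indexed by `ℕ`, so that the empty product `partialProd d 0 = 1` is available. -/
noncomputable def partialProd (d : ℕ+ → ℕ) (j : ℕ) : ℝ := ∏ i ∈ Finset.range j, (d i.succPNat : ℝ)

lemma dprod_eq_partialProd (k : ℕ+) : dprod d k = partialProd d k := by
  rw [dprod, ← map_succPNat_range, Finset.prod_map]
  rfl

lemma partialProd_succ (j : ℕ) : partialProd d (j + 1) = partialProd d j * d j.succPNat :=
  Finset.prod_range_succ _ _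

lemma partialProd_pos (hd : ∀ k, 0 < d k) (j : ℕ) : 0 < partialProd d j :=
  Finset.prod_pos fun _ _ => Nat.cast_pos.2 (hd _)

lemma dprod_pos (hd : ∀ k, 0 < d k) (k : ℕ+) : 0 < dprod d k :=
  dprod_eq_partialProd k ▸ partialProd_pos hd k

lemma monotone_partialProd (hd : ∀ k, 0 < d k) : Monotone (partialProd d) :=
  monotone_nat_of_le_succ fun j => by
    rw [partialProd_succ]
    exact le_mul_of_one_le_right (partialProd_pos hd j).le (Nat.one_le_cast.2 (hd _))

lemma tendsto_partialProd_atTop (hd : ∀ k, 2 ≤ d k) : Tendsto (partialProd d) atTop atTop := by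
  refine tendsto_atTop_mono (fun j => ?_) (tendsto_pow_atTop_atTop_of_one_lt one_lt_two)
  calc (2 : ℝ) ^ j = ∏ _i ∈ Finset.range j, (2 : ℝ) := by simp
    _ ≤ partialProd d j :=
      Finset.prod_le_prod (fun _ _ => zero_le_two) fun _ _ => by exact_mod_cast hd _

/-- The mixed-radix analogue of `0.0999… = 0.1`. -/
lemma hasSum_tail (hd : ∀ k, 2 ≤ d k) (n : ℕ) :
    HasSum (fun k : ℕ+ => if n < (k : ℕ) then ((d k : ℝ) - 1) / dprod d k else 0)
      (1 / partialProd d n) := by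
  have hd₀ : ∀ k, 0 < d k := fun k => zero_lt_two.trans_le (hd k)
  set f : ℕ → ℝ := fun j => 1 / partialProd d (max n j)
  have hf : Antitone f := fun i j hij => one_div_le_one_div_of_le (partialProd_pos hd₀ _)
    (monotone_partialProd hd₀ (max_le_max_left n hij))
  have hlim : Tendsto f atTop (𝓝 0) := by
    simp_rw [f, one_div]
    exact tendsto_inv_atTop_zero.comp <|
      (tendsto_partialProd_atTop hd).comp (tendsto_atTop_mono (le_max_right n) tendsto_id)
  rw [← Equiv.pnatEquivNat.symm.hasSum_iff]
  convert hasSum_sub_succ_of_antitone hf hlim using 1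
  · ext j
    simp only [Function.comp_apply, Equiv.pnatEquivNat_symm_apply, dprod_eq_partialProd, f]
    split_ifs with hj <;> rw [Nat.succPNat_coe] at *
    · have := partialProd_pos hd₀ j
      have : (0 : ℝ) < d j.succPNat := Nat.cast_pos.2 (hd₀ _)
      rw [max_eq_right (by omega), max_eq_right (by omega), partialProd_succ]
      field_simp
    · rw [max_eq_left (by omega), max_eq_left (by omega), sub_self]
  · simp [f]

lemma abs_sigma (B : Set ℕ+) (k : ℕ+) : |sigma B k| = 1 := by
  unfold sigma
  split_ifs <;> norm_num

lemma summable_digits (hd : ∀ k, 2 ≤ d k) (B : Set ℕ+) {a : ℕ+ → ℕ} (ha : ∀ k, a k < d k) :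
    Summable fun k => sigma B k * (a k : ℝ) / dprod d k := by
  refine (hasSum_tail hd 0).summable.of_norm_bounded fun k => ?_
  have hP := dprod_pos (fun k => zero_lt_two.trans_le (hd k)) k
  have hak : (a k : ℝ) ≤ d k - 1 := by
    rw [le_sub_iff_add_le]
    exact_mod_cast ha k
  rw [if_pos k.pos, Real.norm_eq_abs, abs_div, abs_mul, abs_sigma, one_mul, Nat.abs_cast,
    abs_of_pos hP]
  gcongr

lemma hasSum_qndVal_sub (hd : ∀ k, 2 ≤ d k) (B : Set ℕ+) {a b : ℕ+ → ℕ} (ha : ∀ k, a k < d k)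
    (hb : ∀ k, b k < d k) :
    HasSum (fun k => sigma B k * ((a k : ℝ) - b k) / dprod d k) (qndVal d B a - qndVal d B b) := by
  simpa only [qndVal, mul_sub, sub_div] using
    (summable_digits hd B ha).hasSum.sub (summable_digits hd B hb).hasSum

noncomputable def betaExpansion (d : ℕ+ → ℕ) (B : Set ℕ+) (n : ℕ+) (ε : ℕ+ → ℕ) : ℕ+ → ℕ :=
  fun k => if k < n then ε k else if k = n then ε n
    else if k = n + 1 then 0
    else if k ∈ B then d k - 1 else 0

noncomputable def gammaExpansion (d : ℕ+ → ℕ) (B : Set ℕ+) (n : ℕ+) (ε : ℕ+ → ℕ) : ℕ+ → ℕ :=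
  fun k => if k < n then ε k else if k = n then ε n - 1
    else if k = n + 1 then d (n + 1) - 1
    else if k ∉ B then d k - 1 else 0

variable {B : Set ℕ+} {n : ℕ+} {ε : ℕ+ → ℕ}

variable (B n) in
lemma betaExpansion_lt (hd : ∀ k, 0 < d k) (hε : ∀ k, ε k < d k) (k : ℕ+) :
    betaExpansion d B n ε k < d k := by
  have := hε k; have := hε n; have := hd k
  unfold betaExpansion
  split_ifs <;> subst_vars <;> omega

variable (B n) in
lemma gammaExpansion_lt (hd : ∀ k, 0 < d k) (hε : ∀ k, ε k < d k) (k : ℕ+) :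
    gammaExpansion d B n ε k < d k := by
  have := hε k; have := hε n; have := hd k; have := hd (n + 1)
  unfold gammaExpansion
  split_ifs <;> subst_vars <;> omega

lemma sigma_mul_betaExpansion_sub_gammaExpansion (hd : ∀ k, 0 < d k) (hn : n ∉ B)
    (hn1 : n + 1 ∉ B) (hεn : ε n ≠ 0) (k : ℕ+) :
    sigma B k * ((betaExpansion d B n ε k : ℝ) - gammaExpansion d B n ε k) =
      (if k = n then 1 else 0) - if n < k then (d k : ℝ) - 1 else 0 := by
  have hdk : ((d k - 1 : ℕ) : ℝ) = d k - 1 := Nat.cast_pred (hd k)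
  rcases lt_trichotomy k n with hlt | rfl | hgt
  · simp [betaExpansion, gammaExpansion, hlt, hlt.ne, hlt.not_gt]
  · simp [betaExpansion, gammaExpansion, sigma, hn, Nat.cast_pred (Nat.pos_of_ne_zero hεn)]
  · rcases eq_or_ne k (n + 1) with rfl | hne
    · simp [betaExpansion, gammaExpansion, sigma, hn1, hgt.ne', hgt.not_gt, hdk]
    · by_cases hB : k ∈ B <;>
        simp [betaExpansion, gammaExpansion, sigma, hB, hgt, hne, hgt.ne', hgt.not_gt, hdk]

lemma hasSum_single_sub_tail (hd : ∀ k, 2 ≤ d k) (n : ℕ+) :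
    HasSum (fun k => ((if k = n then 1 else 0) - if n < k then (d k : ℝ) - 1 else 0) / dprod d k)
      0 := by
  have h := (hasSum_ite_eq n (1 / dprod d n)).sub (hasSum_tail hd n)
  rw [← dprod_eq_partialProd, sub_self] at h
  simp only [PNat.coe_lt_coe] at h
  refine h.congr_fun fun k => ?_
  rcases eq_or_ne k n with rfl | hk
  · simp
  · simp only [hk, if_false, zero_sub, neg_div, ite_div, zero_div]

end QuasiNegaD

open QuasiNegaD

/-- Case `n ∉ N_B`, `n+1 ∉ N_B`: the two indicated D-digit sequences have equal
quasi-nega-D values. -/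
theorem quasiNegaD_two_reps_notMem_notMem (d : ℕ+ → ℕ) (hd : ∀ k, 2 ≤ d k) (B : Set ℕ+)
    (n : ℕ+) (hn : n ∉ B) (hn1 : n + 1 ∉ B)
    (ε : ℕ+ → ℕ) (hε : ∀ k, ε k < d k) (hεn : ε n ≠ 0) :
    qndVal d B (fun k =>
        if k < n then ε k else if k = n then ε n
        else if k = n + 1 then 0
        else if k ∈ B then d k - 1 else 0)
      = qndVal d B (fun k =>
        if k < n then ε k else if k = n then ε n - 1
        else if k = n + 1 then d (n + 1) - 1
        else if k ∉ B then d k - 1 else 0) := by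
  change qndVal d B (betaExpansion d B n ε) = qndVal d B (gammaExpansion d B n ε)
  have hd₀ : ∀ k, 0 < d k := fun k => zero_lt_two.trans_le (hd k)
  have hsub := hasSum_qndVal_sub hd B (betaExpansion_lt B n hd₀ hε)
    (gammaExpansion_lt B n hd₀ hε)
  simp only [sigma_mul_betaExpansion_sub_gammaExpansion hd₀ hn hn1 hεn] at hsub
  exact sub_eq_zero.1 (hsub.unique (hasSum_single_sub_tail hd n))
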